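/- arXiv:1302.0119 — 3 statements merged into one kernel-verified Lean document; each statement's English description precedes it below -/
import Mathlib

section
/- Let 0 < ν < σ and let r satisfy max{2/σ, 2/(2−ν), 2/(α−ν)} < r < 2/(σ−ν). Then there exists a constant C > 0 such that ∫_{ℝ²} ρ(y) |x−y|^{σ−2} dy ≤ C |x|^{σ−ν−2/r} for almost every x ∈ ℝ². -/
open MeasureTheory Real Filter
open Metric Set ENNReal

noncomputable section

lemma aux_exp2 (T : ℝ) (hT : 0 < T) (p : ℝ) (k : ℕ) :
    (T / 2 ^ (k+1)) ^ p * (T / 2 ^ k) ^ (2:ℕ)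
      = ((2:ℝ) ^ (-p) * T ^ (p + 2)) * ((2:ℝ) ^ (-(p+2))) ^ k := by
  have h2 : (0:ℝ) < 2 := by norm_num
  have e1 : ∀ m : ℕ, T / 2 ^ m = T * (2:ℝ) ^ (-(m:ℝ)) := by
    intro m
    rw [Real.rpow_neg h2.le, Real.rpow_natCast]
    ring
  rw [e1, e1, ← Real.rpow_natCast (T * 2 ^ (-(k:ℝ))) 2,
    Real.mul_rpow hT.le (Real.rpow_nonneg h2.le _),
    Real.mul_rpow hT.le (Real.rpow_nonneg h2.le _),
    ← Real.rpow_natCast ((2:ℝ) ^ (-(p+2))) k,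
    ← Real.rpow_mul h2.le, ← Real.rpow_mul h2.le, ← Real.rpow_mul h2.le]
  rw [show T ^ p * 2 ^ (-(↑(k + 1):ℝ) * p) * (T ^ ((2:ℕ):ℝ) * 2 ^ (-(k:ℝ) * (2:ℕ)))
      = (T ^ p * T ^ ((2:ℕ):ℝ)) * (2 ^ (-(↑(k + 1):ℝ) * p) * 2 ^ (-(k:ℝ) * (2:ℕ))) by ring,
    ← Real.rpow_add hT, ← Real.rpow_add h2]
  rw [show (2:ℝ) ^ (-p) * T ^ (p+2) * 2 ^ (-(p+2) * (k:ℝ))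
      = T ^ (p+2) * (2:ℝ) ^ (-p + -(p+2) * (k:ℝ)) by rw [Real.rpow_add h2]; ring]
  push_cast
  congr 2 <;> ring

end
noncomputable section
lemma aux_exp3 (T : ℝ) (hT : 0 < T) (q : ℝ) (k : ℕ) :
    (T * 2 ^ k) ^ q * (T * 2 ^ (k+1)) ^ (2:ℕ)
      = ((4:ℝ) * T ^ (q + 2)) * ((2:ℝ) ^ (q+2)) ^ k := by
  have h2 : (0:ℝ) < 2 := by norm_num
  have e1 : ∀ m : ℕ, ((2:ℝ)) ^ m = (2:ℝ) ^ ((m:ℝ)) := fun m => (Real.rpow_natCast 2 m).symm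
  rw [e1, e1, ← Real.rpow_natCast (T * 2 ^ ((↑(k+1)):ℝ)) 2,
    Real.mul_rpow hT.le (Real.rpow_nonneg h2.le _),
    Real.mul_rpow hT.le (Real.rpow_nonneg h2.le _),
    ← Real.rpow_natCast ((2:ℝ) ^ (q+2)) k,
    ← Real.rpow_mul h2.le, ← Real.rpow_mul h2.le, ← Real.rpow_mul h2.le]
  rw [show T ^ q * 2 ^ ((k:ℝ) * q) * (T ^ ((2:ℕ):ℝ) * 2 ^ ((↑(k+1):ℝ) * (2:ℕ)))
      = (T ^ q * T ^ ((2:ℕ):ℝ)) * (2 ^ ((k:ℝ) * q) * 2 ^ ((↑(k+1):ℝ) * (2:ℕ))) by ring,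
    ← Real.rpow_add hT, ← Real.rpow_add h2]
  rw [show (4:ℝ) * T ^ (q+2) * 2 ^ ((q+2) * (k:ℝ))
      = T ^ (q+2) * ((2:ℝ)^(2:ℝ) * 2 ^ ((q+2) * (k:ℝ))) by rw [show (2:ℝ)^(2:ℝ) = 4 by
        rw [show (2:ℝ) = ((2:ℕ):ℝ) by norm_num, Real.rpow_natCast]; norm_num]; ring,
    ← Real.rpow_add h2]
  push_cast
  congr 2 <;> ring
end
noncomputable section
local notation "E2" => EuclideanSpace ℝ (Fin 2)

lemma ball_rpow_bound {p : ℝ} (hp2 : -2 < p) (hp0 : p < 0) :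
    ∃ K : ℝ≥0∞, K ≠ ∞ ∧ ∀ T : ℝ, 0 < T →
      (∫⁻ z in ball (0 : E2) T, ENNReal.ofReal (‖z‖ ^ p)) ≤ K * ENNReal.ofReal (T ^ (p + 2)) := by
  set vb := volume (ball (0 : E2) 1) with hvb_def
  have hvb : vb ≠ ∞ := measure_ball_lt_top.ne
  set q : ℝ≥0∞ := ENNReal.ofReal ((2:ℝ) ^ (-(p+2))) with hq_def
  have hrat : q < 1 := by
    rw [hq_def, ENNReal.ofReal_lt_one]
    exact Real.rpow_lt_one_of_one_lt_of_neg one_lt_two (by linarith)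
  refine ⟨ENNReal.ofReal ((2:ℝ) ^ (-p)) * vb * (1 - q)⁻¹, ?_, ?_⟩
  · exact ENNReal.mul_ne_top (ENNReal.mul_ne_top ENNReal.ofReal_ne_top hvb)
      (ENNReal.inv_ne_top.2 (by simp [tsub_eq_zero_iff_le, hrat.not_ge]))
  intro T hT
  set A : ℕ → Set E2 := fun k => {z : E2 | T / 2 ^ (k+1) ≤ ‖z‖} ∩ ball 0 (T / 2 ^ k) with hA
  have hcov : ball (0 : E2) T ⊆ {0} ∪ ⋃ k, A k := by
    intro z hz
    rcases eq_or_ne z 0 with rfl | hz0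
    · exact Or.inl rfl
    have hz' : 0 < ‖z‖ := norm_pos_iff.2 hz0
    have hex : ∃ n : ℕ, T ≤ ‖z‖ * 2 ^ (n+1) := by
      obtain ⟨n, hn⟩ := pow_unbounded_of_one_lt (T / ‖z‖) one_lt_two
      refine ⟨n, ?_⟩
      rw [div_lt_iff₀ hz'] at hn
      have : (2:ℝ) ^ n ≤ 2 ^ (n+1) := by
        apply pow_le_pow_right₀ (by norm_num); omega
      nlinarith
    refine Or.inr (Set.mem_iUnion.2 ⟨Nat.find hex, ?_, ?_⟩)
    · have := Nat.find_spec hex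
      simp only [Set.mem_setOf_eq]
      rw [div_le_iff₀ (by positivity)]
      exact this
    · rw [mem_ball_zero_iff]
      rcases Nat.eq_zero_or_pos (Nat.find hex) with h0 | h0
      · rw [h0]
        simpa using mem_ball_zero_iff.1 hz
      · obtain ⟨m, hm⟩ := Nat.exists_eq_succ_of_ne_zero h0.ne'
        have hmin := Nat.find_min hex (show m < Nat.find hex by omega)
        rw [hm, lt_div_iff₀ (by positivity)]
        simpa [Nat.succ_eq_add_one] using not_le.1 hmin
  have hterm : ∀ k, (∫⁻ z in A k, ENNReal.ofReal (‖z‖ ^ p))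
      ≤ (ENNReal.ofReal ((2:ℝ) ^ (-p) * T ^ (p+2)) * q ^ k) * vb := by
    intro k
    have hpos : 0 < T / 2 ^ (k+1) := by positivity
    calc (∫⁻ z in A k, ENNReal.ofReal (‖z‖ ^ p))
        ≤ ∫⁻ _ in A k, ENNReal.ofReal ((T / 2 ^ (k+1)) ^ p) :=
          setLIntegral_mono measurable_const fun z hz =>
            ENNReal.ofReal_le_ofReal (Real.rpow_le_rpow_of_nonpos hpos hz.1 hp0.le)
      _ = ENNReal.ofReal ((T / 2 ^ (k+1)) ^ p) * volume (A k) := setLIntegral_const _ _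
      _ ≤ ENNReal.ofReal ((T / 2 ^ (k+1)) ^ p) * volume (ball (0:E2) (T / 2 ^ k)) := by
          exact mul_le_mul_right (measure_mono Set.inter_subset_right) _
      _ = ENNReal.ofReal ((T / 2 ^ (k+1)) ^ p) * (ENNReal.ofReal ((T / 2 ^ k) ^ (2:ℕ)) * vb) := by
          rw [Measure.addHaar_ball _ _ (by positivity : (0:ℝ) ≤ T / 2 ^ k),
            finrank_euclideanSpace_fin]
      _ = ENNReal.ofReal ((T / 2 ^ (k+1)) ^ p * (T / 2 ^ k) ^ (2:ℕ)) * vb := by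
          rw [ENNReal.ofReal_mul (Real.rpow_nonneg (by positivity) _), mul_assoc]
      _ = (ENNReal.ofReal ((2:ℝ) ^ (-p) * T ^ (p+2)) * q ^ k) * vb := by
          rw [aux_exp2 T hT p k, ENNReal.ofReal_mul (by positivity), hq_def,
            ENNReal.ofReal_pow (by positivity)]
  calc (∫⁻ z in ball (0 : E2) T, ENNReal.ofReal (‖z‖ ^ p))
      ≤ ∫⁻ z in ({0} ∪ ⋃ k, A k : Set E2), ENNReal.ofReal (‖z‖ ^ p) :=
        lintegral_mono_set hcov
    _ ≤ (∫⁻ z in ({0} : Set E2), ENNReal.ofReal (‖z‖ ^ p))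
        + ∫⁻ z in (⋃ k, A k : Set E2), ENNReal.ofReal (‖z‖ ^ p) := lintegral_union_le _ _ _
    _ ≤ 0 + ∑' k, ∫⁻ z in A k, ENNReal.ofReal (‖z‖ ^ p) := by
        refine add_le_add ?_ (lintegral_iUnion_le _ _)
        rw [setLIntegral_measure_zero _ _ (measure_singleton 0)]
    _ ≤ ∑' k, (ENNReal.ofReal ((2:ℝ) ^ (-p) * T ^ (p+2)) * q ^ k) * vb := by
        rw [zero_add]
        exact ENNReal.tsum_le_tsum hterm
    _ = ENNReal.ofReal ((2:ℝ) ^ (-p) * T ^ (p+2)) * vb * ∑' k, q ^ k := by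
        rw [ENNReal.tsum_mul_right, ENNReal.tsum_mul_left]
        ring
    _ = ENNReal.ofReal ((2:ℝ) ^ (-p)) * vb * (1 - q)⁻¹ * ENNReal.ofReal (T ^ (p+2)) := by
        rw [ENNReal.tsum_geometric, ENNReal.ofReal_mul (by positivity)]
        ring
end
noncomputable section
local notation "E2" => EuclideanSpace ℝ (Fin 2)

lemma tail_rpow_bound {q : ℝ} (hq : q < -2) :
    ∃ K : ℝ≥0∞, K ≠ ∞ ∧ ∀ T : ℝ, 0 < T →
      (∫⁻ z in {z : E2 | T ≤ ‖z‖}, ENNReal.ofReal (‖z‖ ^ q)) ≤ K * ENNReal.ofReal (T ^ (q + 2)) := by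
  set vb := volume (ball (0 : E2) 1) with hvb_def
  have hvb : vb ≠ ∞ := measure_ball_lt_top.ne
  set w : ℝ≥0∞ := ENNReal.ofReal ((2:ℝ) ^ (q+2)) with hw_def
  have hrat : w < 1 := by
    rw [hw_def, ENNReal.ofReal_lt_one]
    exact Real.rpow_lt_one_of_one_lt_of_neg one_lt_two (by linarith)
  refine ⟨ENNReal.ofReal (4:ℝ) * vb * (1 - w)⁻¹, ?_, ?_⟩
  · exact ENNReal.mul_ne_top (ENNReal.mul_ne_top ENNReal.ofReal_ne_top hvb)
      (ENNReal.inv_ne_top.2 (by simp [tsub_eq_zero_iff_le, hrat.not_ge]))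
  intro T hT
  set A : ℕ → Set E2 := fun k => {z : E2 | T * 2 ^ k ≤ ‖z‖} ∩ ball 0 (T * 2 ^ (k+1)) with hA
  have hcov : {z : E2 | T ≤ ‖z‖} ⊆ ⋃ k, A k := by
    intro z hz
    have hzT : T ≤ ‖z‖ := hz
    have hz' : 0 < ‖z‖ := lt_of_lt_of_le hT hzT
    have hex : ∃ n : ℕ, ‖z‖ < T * 2 ^ (n+1) := by
      obtain ⟨n, hn⟩ := pow_unbounded_of_one_lt (‖z‖ / T) one_lt_two
      refine ⟨n, ?_⟩
      rw [div_lt_iff₀ hT] at hn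
      have : (2:ℝ) ^ n ≤ 2 ^ (n+1) := by
        apply pow_le_pow_right₀ (by norm_num); omega
      nlinarith
    refine Set.mem_iUnion.2 ⟨Nat.find hex, ?_, ?_⟩
    · simp only [Set.mem_setOf_eq]
      rcases Nat.eq_zero_or_pos (Nat.find hex) with h0 | h0
      · rw [h0]; simpa using hzT
      · obtain ⟨m, hm⟩ := Nat.exists_eq_succ_of_ne_zero h0.ne'
        have hmin := Nat.find_min hex (show m < Nat.find hex by omega)
        rw [hm]
        simpa [Nat.succ_eq_add_one] using not_lt.1 hmin
    · rw [mem_ball_zero_iff]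
      exact Nat.find_spec hex
  have hterm : ∀ k, (∫⁻ z in A k, ENNReal.ofReal (‖z‖ ^ q))
      ≤ (ENNReal.ofReal ((4:ℝ) * T ^ (q+2)) * w ^ k) * vb := by
    intro k
    have hpos : 0 < T * 2 ^ k := by positivity
    calc (∫⁻ z in A k, ENNReal.ofReal (‖z‖ ^ q))
        ≤ ∫⁻ _ in A k, ENNReal.ofReal ((T * 2 ^ k) ^ q) :=
          setLIntegral_mono measurable_const fun z hz =>
            ENNReal.ofReal_le_ofReal (Real.rpow_le_rpow_of_nonpos hpos hz.1 (by linarith : q ≤ 0))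
      _ = ENNReal.ofReal ((T * 2 ^ k) ^ q) * volume (A k) := setLIntegral_const _ _
      _ ≤ ENNReal.ofReal ((T * 2 ^ k) ^ q) * volume (ball (0:E2) (T * 2 ^ (k+1))) :=
          mul_le_mul_right (measure_mono Set.inter_subset_right) _
      _ = ENNReal.ofReal ((T * 2 ^ k) ^ q) * (ENNReal.ofReal ((T * 2 ^ (k+1)) ^ (2:ℕ)) * vb) := by
          rw [Measure.addHaar_ball _ _ (by positivity : (0:ℝ) ≤ T * 2 ^ (k+1)),
            finrank_euclideanSpace_fin]
      _ = ENNReal.ofReal ((T * 2 ^ k) ^ q * (T * 2 ^ (k+1)) ^ (2:ℕ)) * vb := by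
          rw [ENNReal.ofReal_mul (Real.rpow_nonneg (by positivity) _), mul_assoc]
      _ = (ENNReal.ofReal ((4:ℝ) * T ^ (q+2)) * w ^ k) * vb := by
          rw [aux_exp3 T hT q k, ENNReal.ofReal_mul (by positivity), hw_def,
            ENNReal.ofReal_pow (by positivity)]
  calc (∫⁻ z in {z : E2 | T ≤ ‖z‖}, ENNReal.ofReal (‖z‖ ^ q))
      ≤ ∫⁻ z in (⋃ k, A k : Set E2), ENNReal.ofReal (‖z‖ ^ q) := lintegral_mono_set hcov
    _ ≤ ∑' k, ∫⁻ z in A k, ENNReal.ofReal (‖z‖ ^ q) := lintegral_iUnion_le _ _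
    _ ≤ ∑' k, (ENNReal.ofReal ((4:ℝ) * T ^ (q+2)) * w ^ k) * vb := ENNReal.tsum_le_tsum hterm
    _ = ENNReal.ofReal ((4:ℝ) * T ^ (q+2)) * vb * ∑' k, w ^ k := by
        rw [ENNReal.tsum_mul_right, ENNReal.tsum_mul_left]
        ring
    _ = ENNReal.ofReal (4:ℝ) * vb * (1 - w)⁻¹ * ENNReal.ofReal (T ^ (q+2)) := by
        rw [ENNReal.tsum_geometric, ENNReal.ofReal_mul (by positivity)]
        ring
end
noncomputable section
local notation "E2" => EuclideanSpace ℝ (Fin 2)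

lemma rho_global_bound (ρ : E2 → ℝ) (hρc : Continuous ρ) (hρpos : ∀ x, 0 < ρ x)
    (Ccheck Rcheck α β : ℝ) (hC : 0 < Ccheck) (hβ0 : 0 < β) (hβα : β ≤ α)
    (hdecay : ∀ x : E2, Rcheck ≤ ‖x‖ → ρ x ≤ Ccheck * ‖x‖ ^ (-α)) :
    ∃ D > 0, ∀ y : E2, ρ y ≤ D * (1 + ‖y‖) ^ (-β) := by
  set R₁ := max Rcheck 1 with hR₁
  have hR₁1 : (1:ℝ) ≤ R₁ := le_max_right _ _
  obtain ⟨y₀, _, hy₀'⟩ := (isCompact_closedBall (0:E2) R₁).exists_isMaxOn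
    ⟨0, mem_closedBall_self (by linarith)⟩ hρc.continuousOn
  have hy₀ : ∀ y ∈ closedBall (0:E2) R₁, ρ y ≤ ρ y₀ := fun y hy => hy₀' hy
  set M := ρ y₀ with hM
  have hM0 : 0 < M := hρpos y₀
  set D := max (M * (1+R₁) ^ β) (Ccheck * 2 ^ β) with hD
  have hD0 : 0 < D := lt_max_of_lt_left (by positivity)
  refine ⟨D, hD0, fun y => ?_⟩
  have h1y : (0:ℝ) < 1 + ‖y‖ := by positivity
  rcases le_or_gt ‖y‖ R₁ with hy | hy
  · have hρy : ρ y ≤ M := hy₀ y (by simpa [mem_closedBall_zero_iff] using hy)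
    have h2 : (1 + R₁) ^ (-β) ≤ (1 + ‖y‖) ^ (-β) :=
      Real.rpow_le_rpow_of_nonpos h1y (by linarith) (by linarith)
    have h3 : M = M * (1+R₁) ^ β * (1+R₁) ^ (-β) := by
      rw [mul_assoc, ← Real.rpow_add (by linarith)]
      simp
    calc ρ y ≤ M := hρy
      _ = M * (1+R₁) ^ β * (1+R₁) ^ (-β) := h3
      _ ≤ M * (1+R₁) ^ β * (1+‖y‖) ^ (-β) := by
          apply mul_le_mul_of_nonneg_left h2 (by positivity)
      _ ≤ D * (1+‖y‖) ^ (-β) := by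
          apply mul_le_mul_of_nonneg_right (le_max_left _ _) (by positivity)
  · have hy1 : (1:ℝ) ≤ ‖y‖ := le_trans hR₁1 hy.le
    have hy0 : (0:ℝ) < ‖y‖ := by linarith
    have hρy : ρ y ≤ Ccheck * ‖y‖ ^ (-α) := hdecay y (le_trans (le_max_left _ _) hy.le)
    have h4 : ‖y‖ ^ (-α) ≤ ‖y‖ ^ (-β) :=
      Real.rpow_le_rpow_of_exponent_le hy1 (by linarith)
    have h5 : (2 * ‖y‖) ^ (-β) ≤ (1 + ‖y‖) ^ (-β) :=
      Real.rpow_le_rpow_of_nonpos h1y (by linarith) (by linarith)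
    have h6 : ‖y‖ ^ (-β) ≤ 2 ^ β * (1 + ‖y‖) ^ (-β) := by
      have h7 : (2 * ‖y‖) ^ (-β) = 2 ^ (-β) * ‖y‖ ^ (-β) :=
        Real.mul_rpow (by norm_num) hy0.le
      have h8 : (2:ℝ) ^ β * (2:ℝ) ^ (-β) = 1 := by
        rw [← Real.rpow_add (by norm_num)]; simp
      calc ‖y‖ ^ (-β) = 2 ^ β * ((2:ℝ) ^ (-β) * ‖y‖ ^ (-β)) := by
            rw [← mul_assoc, h8, one_mul]
        _ = 2 ^ β * (2 * ‖y‖) ^ (-β) := by rw [h7]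
        _ ≤ 2 ^ β * (1 + ‖y‖) ^ (-β) := by
            apply mul_le_mul_of_nonneg_left h5 (by positivity)
    calc ρ y ≤ Ccheck * ‖y‖ ^ (-α) := hρy
      _ ≤ Ccheck * ‖y‖ ^ (-β) := mul_le_mul_of_nonneg_left h4 hC.le
      _ ≤ Ccheck * (2 ^ β * (1 + ‖y‖) ^ (-β)) := mul_le_mul_of_nonneg_left h6 hC.le
      _ = Ccheck * 2 ^ β * (1 + ‖y‖) ^ (-β) := by ring
      _ ≤ D * (1+‖y‖) ^ (-β) :=
          mul_le_mul_of_nonneg_right (le_max_right _ _) (by positivity)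
end
noncomputable section
local notation "E2" => EuclideanSpace ℝ (Fin 2)

lemma aux_halfpow (R c : ℝ) (hR : 0 < R) : (R/2) ^ c = 2 ^ (-c) * R ^ c := by
  rw [Real.div_rpow hR.le (by norm_num), Real.rpow_neg (by norm_num)]
  field_simp

lemma riesz_pointwise_bound (σ β D : ℝ) (hσ0 : 0 < σ) (hσ2 : σ < 2)
    (hβσ : σ < β) (hβ2 : β < 2) (hD : 0 < D)
    (ρ : E2 → ℝ)
    (hρb : ∀ y : E2, ρ y ≤ D * (1 + ‖y‖) ^ (-β)) :
    ∃ K : ℝ≥0∞, K ≠ ∞ ∧ ∀ x : E2,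
      (∫⁻ y : E2, ENNReal.ofReal (ρ y * ‖x - y‖ ^ (σ - 2)))
        ≤ K * ENNReal.ofReal ((1 + ‖x‖) ^ (σ - β)) := by
  have hβ0 : 0 < β := lt_trans hσ0 hβσ
  obtain ⟨K1, hK1top, hK1⟩ := ball_rpow_bound (p := σ - 2) (by linarith) (by linarith)
  obtain ⟨K2, hK2top, hK2⟩ := ball_rpow_bound (p := -β) (by linarith) (by linarith)
  obtain ⟨K3, hK3top, hK3⟩ := tail_rpow_bound (q := σ - 2 - β) (by linarith)
  set c1 : ℝ≥0∞ := ENNReal.ofReal (D * 2 ^ (β - σ)) * K1 with hc1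
  set c2 : ℝ≥0∞ := ENNReal.ofReal (D * (2 ^ (2 - σ) * 2 ^ (2 - β))) * K2 with hc2
  set c3 : ℝ≥0∞ := ENNReal.ofReal (D * 2 ^ (2 - σ) * 2 ^ (σ - β)) * K3 with hc3
  refine ⟨c1 + c2 + c3, ?_, fun x => ?_⟩
  · refine ENNReal.add_ne_top.2 ⟨ENNReal.add_ne_top.2 ⟨?_, ?_⟩, ?_⟩ <;>
      exact ENNReal.mul_ne_top ENNReal.ofReal_ne_top (by assumption)
  set R := 1 + ‖x‖ with hR
  have hR1 : (1:ℝ) ≤ R := by simp [hR, norm_nonneg]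
  have hR0 : (0:ℝ) < R := by linarith
  have hRhalf : (0:ℝ) < R / 2 := by linarith
  have hxR : ‖x‖ < R := by simp [hR]
  set X := ENNReal.ofReal (R ^ (σ - β)) with hX
  -- Piece A : the ball around x
  have hA : (∫⁻ y in ball x (R/2), ENNReal.ofReal (ρ y * ‖x - y‖ ^ (σ - 2))) ≤ c1 * X := by
    have step1 : ∀ y ∈ ball x (R/2), ENNReal.ofReal (ρ y * ‖x - y‖ ^ (σ - 2)) ≤
        ENNReal.ofReal (D * (R/2) ^ (-β) * ‖x - y‖ ^ (σ - 2)) := by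
      intro y hy
      apply ENNReal.ofReal_le_ofReal
      apply mul_le_mul_of_nonneg_right _ (Real.rpow_nonneg (norm_nonneg _) _)
      refine le_trans (hρb y) (mul_le_mul_of_nonneg_left ?_ hD.le)
      apply Real.rpow_le_rpow_of_nonpos hRhalf _ (by linarith)
      have h1 : ‖y - x‖ < R/2 := mem_ball_iff_norm.1 hy
      have h2 : ‖x‖ - ‖y‖ ≤ ‖x - y‖ := norm_sub_norm_le x y
      rw [norm_sub_rev] at h1
      linarith
    have htrans : (∫⁻ y in ball x (R/2), ENNReal.ofReal (‖x - y‖ ^ (σ - 2)))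
        = ∫⁻ z in ball (0:E2) (R/2), ENNReal.ofReal (‖z‖ ^ (σ - 2)) := by
      rw [← lintegral_indicator measurableSet_ball, ← lintegral_indicator measurableSet_ball]
      rw [show ((ball x (R/2)).indicator fun y => ENNReal.ofReal (‖x - y‖ ^ (σ - 2)))
          = fun y => ((ball (0:E2) (R/2)).indicator
              (fun z => ENNReal.ofReal (‖z‖ ^ (σ - 2)))) (y - x) by
        funext y
        by_cases hy : y ∈ ball x (R/2)
        · have hy' : y - x ∈ ball (0:E2) (R/2) := by
            rw [mem_ball_zero_iff]; exact mem_ball_iff_norm.1 hy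
          rw [Set.indicator_of_mem hy, Set.indicator_of_mem hy', norm_sub_rev]
        · have hy' : y - x ∉ ball (0:E2) (R/2) := by
            rw [mem_ball_zero_iff]; exact fun h => hy (mem_ball_iff_norm.2 h)
          rw [Set.indicator_of_notMem hy, Set.indicator_of_notMem hy']]
      exact lintegral_sub_right_eq_self
        (fun z => ((ball (0:E2) (R/2)).indicator fun z => ENNReal.ofReal (‖z‖ ^ (σ - 2))) z) x
    have algA : D * (R/2) ^ (-β) * (R/2) ^ (σ - 2 + 2) = D * 2 ^ (β - σ) * R ^ (σ - β) := by
      have e1 : σ - 2 + 2 = σ := by ring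
      rw [e1, aux_halfpow _ _ hR0, aux_halfpow _ _ hR0]
      rw [show (2:ℝ) ^ (β - σ) = 2 ^ (-(-β)) * 2 ^ (-σ) by
          rw [← Real.rpow_add two_pos]; congr 1; ring,
        show R ^ (σ - β) = R ^ (-β) * R ^ σ by
          rw [← Real.rpow_add hR0]; congr 1; ring]
      ring
    calc (∫⁻ y in ball x (R/2), ENNReal.ofReal (ρ y * ‖x - y‖ ^ (σ - 2)))
        ≤ ∫⁻ y in ball x (R/2), ENNReal.ofReal (D * (R/2) ^ (-β) * ‖x - y‖ ^ (σ - 2)) := by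
          refine setLIntegral_mono ?_ step1
          exact ((((measurable_const.sub measurable_id).norm).pow
            measurable_const).const_mul _).ennreal_ofReal
      _ = ∫⁻ y in ball x (R/2),
            ENNReal.ofReal (D * (R/2) ^ (-β)) * ENNReal.ofReal (‖x - y‖ ^ (σ - 2)) := by
          congr 1
          funext y
          rw [ENNReal.ofReal_mul (by positivity)]
      _ = ENNReal.ofReal (D * (R/2) ^ (-β))
            * ∫⁻ y in ball x (R/2), ENNReal.ofReal (‖x - y‖ ^ (σ - 2)) :=
          lintegral_const_mul' _ _ ENNReal.ofReal_ne_top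
      _ = ENNReal.ofReal (D * (R/2) ^ (-β))
            * ∫⁻ z in ball (0:E2) (R/2), ENNReal.ofReal (‖z‖ ^ (σ - 2)) := by rw [htrans]
      _ ≤ ENNReal.ofReal (D * (R/2) ^ (-β)) * (K1 * ENNReal.ofReal ((R/2) ^ (σ - 2 + 2))) :=
          mul_le_mul_right (hK1 (R/2) hRhalf) _
      _ = c1 * X := by
          rw [hc1, hX,
            show ENNReal.ofReal (D * (R / 2) ^ (-β)) * (K1 * ENNReal.ofReal ((R / 2) ^ (σ - 2 + 2)))
              = K1 * (ENNReal.ofReal (D * (R / 2) ^ (-β)) * ENNReal.ofReal ((R / 2) ^ (σ - 2 + 2)))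
              by ring,
            ← ENNReal.ofReal_mul (by positivity), algA,
            ENNReal.ofReal_mul (by positivity)]
          ring
  -- Piece B : intermediate region
  have h2R : (0:ℝ) < 2 * R := by linarith
  have hB : (∫⁻ y in (ball x (R/2))ᶜ ∩ ball (0:E2) (2*R),
      ENNReal.ofReal (ρ y * ‖x - y‖ ^ (σ - 2))) ≤ c2 * X := by
    have hmeas : Measurable fun y : E2 =>
        ENNReal.ofReal (D * (R/2) ^ (σ-2) * ‖y‖ ^ (-β)) :=
      (((measurable_id.norm).pow measurable_const).const_mul _).ennreal_ofReal
    have hae : ∀ᵐ y : E2, y ∈ (ball x (R/2))ᶜ ∩ ball (0:E2) (2*R) →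
        ENNReal.ofReal (ρ y * ‖x - y‖ ^ (σ - 2)) ≤
          ENNReal.ofReal (D * (R/2) ^ (σ-2) * ‖y‖ ^ (-β)) := by
      filter_upwards [compl_mem_ae_iff.mpr (measure_singleton (0:E2))] with y hy0 hy
      have hyn : 0 < ‖y‖ := norm_pos_iff.2 hy0
      apply ENNReal.ofReal_le_ofReal
      have hxy : R/2 ≤ ‖y - x‖ := not_lt.1 (fun h => hy.1 (mem_ball_iff_norm.2 h))
      have h1 : ρ y ≤ D * ‖y‖ ^ (-β) := le_trans (hρb y)
        (mul_le_mul_of_nonneg_left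
          (Real.rpow_le_rpow_of_nonpos hyn (by linarith) (by linarith)) hD.le)
      have h2 : ‖x - y‖ ^ (σ-2) ≤ (R/2) ^ (σ-2) := by
        apply Real.rpow_le_rpow_of_nonpos hRhalf _ (by linarith)
        rw [norm_sub_rev]
        exact hxy
      calc ρ y * ‖x - y‖ ^ (σ-2) ≤ (D * ‖y‖ ^ (-β)) * ((R/2) ^ (σ-2)) :=
            mul_le_mul h1 h2 (Real.rpow_nonneg (norm_nonneg _) _) (by positivity)
        _ = D * (R/2) ^ (σ-2) * ‖y‖ ^ (-β) := by ring
    have algB : D * (R/2) ^ (σ-2) * (2*R) ^ (-β+2)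
        = D * (2 ^ (2-σ) * 2 ^ (2-β)) * R ^ (σ-β) := by
      rw [aux_halfpow _ _ hR0, Real.mul_rpow (by norm_num) hR0.le,
        show (2:ℝ) ^ (2-σ) = 2 ^ (-(σ-2)) by congr 1; ring,
        show (2:ℝ) ^ (2-β) = 2 ^ (-β+2) by congr 1; ring,
        show R ^ (σ-β) = R ^ (σ-2) * R ^ (-β+2) by
          rw [← Real.rpow_add hR0]; congr 1; ring]
      ring
    calc (∫⁻ y in (ball x (R/2))ᶜ ∩ ball (0:E2) (2*R),
        ENNReal.ofReal (ρ y * ‖x - y‖ ^ (σ - 2)))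
        ≤ ∫⁻ y in (ball x (R/2))ᶜ ∩ ball (0:E2) (2*R),
            ENNReal.ofReal (D * (R/2) ^ (σ-2) * ‖y‖ ^ (-β)) :=
          setLIntegral_mono_ae hmeas.aemeasurable hae
      _ = ∫⁻ y in (ball x (R/2))ᶜ ∩ ball (0:E2) (2*R),
            ENNReal.ofReal (D * (R/2) ^ (σ-2)) * ENNReal.ofReal (‖y‖ ^ (-β)) := by
          congr 1
          funext y
          rw [ENNReal.ofReal_mul (by positivity)]
      _ = ENNReal.ofReal (D * (R/2) ^ (σ-2))
            * ∫⁻ y in (ball x (R/2))ᶜ ∩ ball (0:E2) (2*R), ENNReal.ofReal (‖y‖ ^ (-β)) :=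
          lintegral_const_mul' _ _ ENNReal.ofReal_ne_top
      _ ≤ ENNReal.ofReal (D * (R/2) ^ (σ-2))
            * ∫⁻ y in ball (0:E2) (2*R), ENNReal.ofReal (‖y‖ ^ (-β)) :=
          mul_le_mul_right (lintegral_mono_set Set.inter_subset_right) _
      _ ≤ ENNReal.ofReal (D * (R/2) ^ (σ-2)) * (K2 * ENNReal.ofReal ((2*R) ^ (-β+2))) :=
          mul_le_mul_right (hK2 _ h2R) _
      _ = c2 * X := by
          rw [hc2, hX,
            show ENNReal.ofReal (D * (R/2) ^ (σ-2)) * (K2 * ENNReal.ofReal ((2*R) ^ (-β+2)))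
              = K2 * (ENNReal.ofReal (D * (R/2) ^ (σ-2)) * ENNReal.ofReal ((2*R) ^ (-β+2)))
              by ring,
            ← ENNReal.ofReal_mul (by positivity), algB,
            ENNReal.ofReal_mul (by positivity)]
          ring
  -- Piece C : far region
  have hC : (∫⁻ y in (ball x (R/2))ᶜ ∩ (ball (0:E2) (2*R))ᶜ,
      ENNReal.ofReal (ρ y * ‖x - y‖ ^ (σ - 2))) ≤ c3 * X := by
    have hmeas : Measurable fun y : E2 =>
        ENNReal.ofReal (D * 2 ^ (2-σ) * ‖y‖ ^ (σ-2-β)) :=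
      (((measurable_id.norm).pow measurable_const).const_mul _).ennreal_ofReal
    have hpt : ∀ y ∈ (ball x (R/2))ᶜ ∩ (ball (0:E2) (2*R))ᶜ,
        ENNReal.ofReal (ρ y * ‖x - y‖ ^ (σ - 2)) ≤
          ENNReal.ofReal (D * 2 ^ (2-σ) * ‖y‖ ^ (σ-2-β)) := by
      intro y hy
      have hy2R : 2*R ≤ ‖y‖ := not_lt.1 (fun h => hy.2 (mem_ball_zero_iff.2 h))
      have hyn : 0 < ‖y‖ := lt_of_lt_of_le h2R hy2R
      apply ENNReal.ofReal_le_ofReal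
      have hxy : ‖y‖/2 ≤ ‖x - y‖ := by
        have h3 : ‖y‖ - ‖x‖ ≤ ‖y - x‖ := norm_sub_norm_le y x
        rw [norm_sub_rev]
        linarith
      have h1 : ρ y ≤ D * ‖y‖ ^ (-β) := le_trans (hρb y)
        (mul_le_mul_of_nonneg_left
          (Real.rpow_le_rpow_of_nonpos hyn (by linarith) (by linarith)) hD.le)
      have h2 : ‖x - y‖ ^ (σ-2) ≤ 2 ^ (2-σ) * ‖y‖ ^ (σ-2) := by
        have h4 := Real.rpow_le_rpow_of_nonpos
          (by positivity : (0:ℝ) < ‖y‖/2) hxy (by linarith : σ-2 ≤ 0)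
        rw [aux_halfpow _ _ hyn] at h4
        rw [show (2:ℝ) ^ (2-σ) = 2 ^ (-(σ-2)) by congr 1; ring]
        exact h4
      calc ρ y * ‖x - y‖ ^ (σ-2) ≤ (D * ‖y‖ ^ (-β)) * (2 ^ (2-σ) * ‖y‖ ^ (σ-2)) :=
            mul_le_mul h1 h2 (Real.rpow_nonneg (norm_nonneg _) _) (by positivity)
        _ = D * 2 ^ (2-σ) * (‖y‖ ^ (-β) * ‖y‖ ^ (σ-2)) := by ring
        _ = D * 2 ^ (2-σ) * ‖y‖ ^ (σ-2-β) := by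
            rw [← Real.rpow_add hyn]
            congr 1
            ring
    have hsub : (ball x (R/2))ᶜ ∩ (ball (0:E2) (2*R))ᶜ ⊆ {z : E2 | 2*R ≤ ‖z‖} :=
      fun z hz => not_lt.1 (fun h => hz.2 (mem_ball_zero_iff.2 h))
    have algC : D * 2 ^ (2-σ) * (2*R) ^ (σ-2-β+2)
        = D * 2 ^ (2-σ) * 2 ^ (σ-β) * R ^ (σ-β) := by
      rw [show σ-2-β+2 = σ-β by ring, Real.mul_rpow (by norm_num) hR0.le]
      ring
    calc (∫⁻ y in (ball x (R/2))ᶜ ∩ (ball (0:E2) (2*R))ᶜ,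
        ENNReal.ofReal (ρ y * ‖x - y‖ ^ (σ - 2)))
        ≤ ∫⁻ y in (ball x (R/2))ᶜ ∩ (ball (0:E2) (2*R))ᶜ,
            ENNReal.ofReal (D * 2 ^ (2-σ) * ‖y‖ ^ (σ-2-β)) :=
          setLIntegral_mono hmeas hpt
      _ = ∫⁻ y in (ball x (R/2))ᶜ ∩ (ball (0:E2) (2*R))ᶜ,
            ENNReal.ofReal (D * 2 ^ (2-σ)) * ENNReal.ofReal (‖y‖ ^ (σ-2-β)) := by
          congr 1
          funext y
          rw [ENNReal.ofReal_mul (by positivity)]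
      _ = ENNReal.ofReal (D * 2 ^ (2-σ))
            * ∫⁻ y in (ball x (R/2))ᶜ ∩ (ball (0:E2) (2*R))ᶜ,
                ENNReal.ofReal (‖y‖ ^ (σ-2-β)) :=
          lintegral_const_mul' _ _ ENNReal.ofReal_ne_top
      _ ≤ ENNReal.ofReal (D * 2 ^ (2-σ))
            * ∫⁻ y in {z : E2 | 2*R ≤ ‖z‖}, ENNReal.ofReal (‖y‖ ^ (σ-2-β)) :=
          mul_le_mul_right (lintegral_mono_set hsub) _
      _ ≤ ENNReal.ofReal (D * 2 ^ (2-σ)) * (K3 * ENNReal.ofReal ((2*R) ^ (σ-2-β+2))) :=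
          mul_le_mul_right (hK3 _ h2R) _
      _ = c3 * X := by
          rw [hc3, hX,
            show ENNReal.ofReal (D * 2 ^ (2-σ)) * (K3 * ENNReal.ofReal ((2*R) ^ (σ-2-β+2)))
              = K3 * (ENNReal.ofReal (D * 2 ^ (2-σ)) * ENNReal.ofReal ((2*R) ^ (σ-2-β+2)))
              by ring,
            ← ENNReal.ofReal_mul (by positivity), algC,
            ENNReal.ofReal_mul (by positivity)]
          ring
  -- Assemble
  calc (∫⁻ y : E2, ENNReal.ofReal (ρ y * ‖x - y‖ ^ (σ - 2)))
      = (∫⁻ y in ball x (R/2), ENNReal.ofReal (ρ y * ‖x - y‖ ^ (σ - 2)))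
        + ∫⁻ y in (ball x (R/2))ᶜ, ENNReal.ofReal (ρ y * ‖x - y‖ ^ (σ - 2)) :=
      (lintegral_add_compl _ measurableSet_ball).symm
    _ ≤ c1 * X + (c2 * X + c3 * X) := by
        refine add_le_add hA (le_trans ?_ (add_le_add hB hC))
        calc (∫⁻ y in (ball x (R/2))ᶜ, ENNReal.ofReal (ρ y * ‖x - y‖ ^ (σ - 2)))
            = ∫⁻ y in ((ball x (R/2))ᶜ ∩ ball (0:E2) (2*R))
                ∪ ((ball x (R/2))ᶜ ∩ (ball (0:E2) (2*R))ᶜ),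
                ENNReal.ofReal (ρ y * ‖x - y‖ ^ (σ - 2)) := by
              rw [Set.inter_union_compl]
          _ ≤ _ := lintegral_union_le _ _ _
    _ = (c1 + c2 + c3) * X := by ring
end

/-- Decay of the Riesz potential of a fast-decaying density in dimension 2:
`∫_{ℝ²} ρ(y)|x−y|^{σ−2} dy ≤ C |x|^{σ−ν−2/r}` for a.e. `x ∈ ℝ²`. -/
theorem riesz_potential_decay_dim_two
    (σ : ℝ) (hσ0 : 0 < σ) (hσ2 : σ < 2)
    (ρ : EuclideanSpace ℝ (Fin 2) → ℝ) (hρc : Continuous ρ)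
    (hρpos : ∀ x, 0 < ρ x)
    (Ccheck Rcheck α : ℝ) (hC : 0 < Ccheck) (hR : 0 < Rcheck) (hα : σ < α)
    (hdecay : ∀ x : EuclideanSpace ℝ (Fin 2), Rcheck ≤ ‖x‖ →
      ρ x ≤ Ccheck * ‖x‖ ^ (-α))
    (ν r : ℝ) (hν0 : 0 < ν) (hνσ : ν < σ)
    (hr1 : 2 / σ < r) (hr2 : 2 / (2 - ν) < r) (hr3 : 2 / (α - ν) < r)
    (hr4 : r < 2 / (σ - ν)) :
    ∃ C > 0, ∀ᵐ x : EuclideanSpace ℝ (Fin 2),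
      (∫⁻ y : EuclideanSpace ℝ (Fin 2),
          ENNReal.ofReal (ρ y * ‖x - y‖ ^ (σ - 2)))
        ≤ ENNReal.ofReal (C * ‖x‖ ^ (σ - ν - 2 / r)) := by
  have hr0 : 0 < r := lt_trans (by positivity) hr1
  have hνα : ν < α := lt_trans hνσ hα
  have h2r0 : 0 < 2 / r := by positivity
  have hrα : 2 / r < α - ν := by
    have h := (div_lt_iff₀ (by linarith : (0:ℝ) < α - ν)).1 hr3
    rw [div_lt_iff₀ hr0]
    nlinarith
  have hr2' : 2 / r < 2 - ν := by
    have h := (div_lt_iff₀ (by linarith : (0:ℝ) < 2 - ν)).1 hr2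
    rw [div_lt_iff₀ hr0]
    nlinarith
  have he : σ - ν - 2 / r < 0 := by
    have h := (lt_div_iff₀ (by linarith : (0:ℝ) < σ - ν)).1 hr4
    have h2 : σ - ν < 2 / r := by
      rw [lt_div_iff₀ hr0]
      nlinarith
    linarith
  set L := max σ (ν + 2 / r) with hL
  set U := min α 2 with hU
  have hLU : L < U := max_lt (lt_min hα hσ2) (lt_min (by linarith) (by linarith))
  set β := (L + U) / 2 with hβ
  have hLl : σ ≤ L := le_max_left _ _
  have hLl2 : ν + 2 / r ≤ L := le_max_right _ _
  have hUα : U ≤ α := min_le_left _ _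
  have hU2 : U ≤ 2 := min_le_right _ _
  have hσβ : σ < β := by simp only [hβ]; linarith
  have hβ2 : β < 2 := by simp only [hβ]; linarith
  have hβα : β ≤ α := by simp only [hβ]; linarith
  have hνβ : ν + 2 / r < β := by simp only [hβ]; linarith
  obtain ⟨D, hD0, hρb⟩ := rho_global_bound ρ hρc hρpos Ccheck Rcheck α β hC
    (by linarith) hβα hdecay
  obtain ⟨K, hKtop, hK⟩ := riesz_pointwise_bound σ β D hσ0 hσ2 hσβ hβ2 hD0 ρ hρb
  refine ⟨K.toReal + 1, by positivity, ?_⟩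
  filter_upwards [compl_mem_ae_iff.mpr
    (measure_singleton (0 : EuclideanSpace ℝ (Fin 2)))] with x hx
  have hxn : 0 < ‖x‖ := norm_pos_iff.2 hx
  have hfact : (1 + ‖x‖) ^ (σ - β) ≤ ‖x‖ ^ (σ - ν - 2 / r) := by
    rcases le_or_gt ‖x‖ 1 with h1 | h1
    · calc (1 + ‖x‖) ^ (σ - β)
          ≤ 1 := Real.rpow_le_one_of_one_le_of_nonpos (by linarith [norm_nonneg x])
            (by linarith)
        _ ≤ ‖x‖ ^ (σ - ν - 2 / r) :=
            Real.one_le_rpow_of_pos_of_le_one_of_nonpos hxn h1 (by linarith)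
    · calc (1 + ‖x‖) ^ (σ - β)
          ≤ ‖x‖ ^ (σ - β) :=
            Real.rpow_le_rpow_of_nonpos hxn (by linarith) (by linarith)
        _ ≤ ‖x‖ ^ (σ - ν - 2 / r) :=
            Real.rpow_le_rpow_of_exponent_le h1.le (by linarith)
  calc (∫⁻ y : EuclideanSpace ℝ (Fin 2), ENNReal.ofReal (ρ y * ‖x - y‖ ^ (σ - 2)))
      ≤ K * ENNReal.ofReal ((1 + ‖x‖) ^ (σ - β)) := hK x
    _ = ENNReal.ofReal (K.toReal * (1 + ‖x‖) ^ (σ - β)) := by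
        rw [← ENNReal.ofReal_toReal hKtop, ← ENNReal.ofReal_mul ENNReal.toReal_nonneg,
          ENNReal.ofReal_toReal hKtop]
    _ ≤ ENNReal.ofReal ((K.toReal + 1) * ‖x‖ ^ (σ - ν - 2 / r)) := by
        apply ENNReal.ofReal_le_ofReal
        apply mul_le_mul (by linarith) hfact (Real.rpow_nonneg (by positivity) _)
          (by positivity)
end

section
/- The Riesz potential of ρ of order σ vanishes at infinity in the essential sense: for every ε > 0 there exists M > 0 such that ∫_{ℝ^N} ρ(y) |x−y|^{σ−N} dy < ε for almost every x ∈ ℝ^N with |x| > M. -/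
/-!
Bound `ρ` globally by `C (1 + |y|)^{-α}` (continuity on a large ball, decay outside it). For
`|x| = R`, split at `|x - y| = R / 2`. Near `x` we have `|y| ≥ max (R / 2) |x - y|`, so that part is
at most `C ∫ (1 + max (R / 2) |z|)^{-α} |z|^{σ-N} dz`; away from `x` we have
`|x - y| ≥ (R + |y|) / 5`, so that part is at most `C 5^{N-σ} ∫ (1 + |y|)^{-α} (R + |y|)^{σ-N} dy`.
Both integrals tend to `0` as `R → ∞` by dominated convergence: the dominating functions are
integrable because `σ > 0` (near the origin) and `α > σ` (at infinity).
-/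

open MeasureTheory Filter Topology Module Metric

lemma rpow_le_rpow_neg_mul_rpow_of_le_mul {a b c p : ℝ} (ha : 0 < a) (hc : 0 < c)
    (hab : a ≤ c * b) (hp : p ≤ 0) : b ^ p ≤ c ^ (-p) * a ^ p := by
  calc b ^ p ≤ (a / c) ^ p :=
        Real.rpow_le_rpow_of_nonpos (by positivity) (by rwa [div_le_iff₀' hc]) hp
    _ = c ^ (-p) * a ^ p := by
        rw [Real.div_rpow ha.le hc.le, Real.rpow_neg hc.le, div_eq_inv_mul]

section SeminormedAddCommGroup

variable {E : Type*} [SeminormedAddCommGroup E]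

lemma Continuous.exists_le_mul_one_add_norm_rpow [ProperSpace E] {ρ : E → ℝ}
    (hρ : Continuous ρ) {C R α : ℝ} (hC : 0 ≤ C) (hα : 0 ≤ α)
    (hdecay : ∀ x, R ≤ ‖x‖ → ρ x ≤ C * ‖x‖ ^ (-α)) :
    ∃ C' ≥ 0, ∀ x, ρ x ≤ C' * (1 + ‖x‖) ^ (-α) := by
  set R₁ := max R 1
  obtain ⟨B, hB⟩ := (isCompact_closedBall (0 : E) R₁).bddAbove_image hρ.continuousOn
  refine ⟨max (max B 0 * (1 + R₁) ^ α) (C * 2 ^ α), by positivity, fun x => ?_⟩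
  rcases le_or_gt ‖x‖ R₁ with hx | hx
  · have hρx : ρ x ≤ max B 0 := (hB ⟨x, mem_closedBall_zero_iff.2 hx, rfl⟩).trans (le_max_left _ _)
    calc ρ x ≤ max B 0 * (1 + R₁) ^ α * (1 + R₁) ^ (-α) := by
          rwa [mul_assoc, ← Real.rpow_add (by positivity), add_neg_cancel, Real.rpow_zero,
            mul_one]
      _ ≤ max B 0 * (1 + R₁) ^ α * (1 + ‖x‖) ^ (-α) := by
          refine mul_le_mul_of_nonneg_left ?_ (by positivity)
          exact Real.rpow_le_rpow_of_nonpos (by positivity) (by linarith) (neg_nonpos.2 hα)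
      _ ≤ _ := by gcongr; exact le_max_left _ _
  · have hx1 : 1 ≤ ‖x‖ := (le_max_right _ _).trans hx.le
    calc ρ x ≤ C * ‖x‖ ^ (-α) := hdecay x ((le_max_left _ _).trans hx.le)
      _ ≤ C * (2 ^ α * (1 + ‖x‖) ^ (-α)) := by
          gcongr
          simpa only [neg_neg] using
            rpow_le_rpow_neg_mul_rpow_of_le_mul (by positivity) two_pos (by linarith)
              (neg_nonpos.2 hα)
      _ ≤ _ := by rw [← mul_assoc]; gcongr; exact le_max_right _ _

lemma mul_norm_sub_rpow_le {ρ : E → ℝ} {C α p : ℝ} (hC : 0 ≤ C) (hα : 0 ≤ α) (hp : p ≤ 0)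
    (hρ : ∀ y, ρ y ≤ C * (1 + ‖y‖) ^ (-α)) (x y : E) :
    ρ y * ‖x - y‖ ^ p ≤
      C * ((1 + max (‖x‖ / 2) ‖x - y‖) ^ (-α) * ‖x - y‖ ^ p) +
        C * 5 ^ (-p) * ((1 + ‖y‖) ^ (-α) * (‖x‖ + ‖y‖) ^ p) := by
  have hx : ‖x‖ ≤ ‖x - y‖ + ‖y‖ := norm_le_norm_sub_add x y
  have hy : ‖y‖ ≤ ‖x - y‖ + ‖x‖ := by simpa [norm_sub_rev] using norm_le_norm_sub_add y x
  rcases le_or_gt ‖x - y‖ (‖x‖ / 2) with hnear | hfar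
  · have hweight : (1 + ‖y‖) ^ (-α) ≤ (1 + max (‖x‖ / 2) ‖x - y‖) ^ (-α) :=
      Real.rpow_le_rpow_of_nonpos (by positivity)
        (by gcongr; exact max_le (by linarith) (by linarith)) (neg_nonpos.2 hα)
    calc ρ y * ‖x - y‖ ^ p ≤ C * (1 + ‖y‖) ^ (-α) * ‖x - y‖ ^ p := by gcongr; exact hρ y
      _ ≤ C * ((1 + max (‖x‖ / 2) ‖x - y‖) ^ (-α) * ‖x - y‖ ^ p) := by
          rw [mul_assoc]; gcongr
      _ ≤ _ := le_add_of_nonneg_right (by positivity)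
  · have hkernel : ‖x - y‖ ^ p ≤ 5 ^ (-p) * (‖x‖ + ‖y‖) ^ p :=
      rpow_le_rpow_neg_mul_rpow_of_le_mul
        (by linarith [norm_nonneg x, norm_sub_le x y]) (by norm_num)
        (by linarith) hp
    calc ρ y * ‖x - y‖ ^ p ≤ C * (1 + ‖y‖) ^ (-α) * (5 ^ (-p) * (‖x‖ + ‖y‖) ^ p) :=
          mul_le_mul (hρ y) hkernel (by positivity) (by positivity)
      _ = C * 5 ^ (-p) * ((1 + ‖y‖) ^ (-α) * (‖x‖ + ‖y‖) ^ p) := by ring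
      _ ≤ _ := le_add_of_nonneg_left (by positivity)

end SeminormedAddCommGroup

section FiniteDimensional

variable {E : Type*} [NormedAddCommGroup E] [NormedSpace ℝ E] [FiniteDimensional ℝ E]
  [MeasurableSpace E] [BorelSpace E] {μ : Measure E} [μ.IsAddHaarMeasure]

lemma integrable_one_add_norm_rpow_neg_mul_norm_rpow {α p : ℝ}
    (hp : -(finrank ℝ E : ℝ) < p) (hp0 : p ≤ 0) (hα : (finrank ℝ E : ℝ) < α - p) :
    Integrable (fun z : E => (1 + ‖z‖) ^ (-α) * ‖z‖ ^ p) μ := by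
  have hα0 : 0 ≤ α := by linarith
  have hd : 1 ≤ finrank ℝ E := by
    have : (0 : ℝ) < finrank ℝ E := by linarith
    exact_mod_cast this
  have hmeas : AEStronglyMeasurable (fun z : E => (1 + ‖z‖) ^ (-α) * ‖z‖ ^ p) μ := by
    fun_prop
  have hball : IntegrableOn (fun z : E => (1 + ‖z‖) ^ (-α) * ‖z‖ ^ p) (ball 0 1) μ := by
    refine integrableOn_ball_of_norm_le_rpow hd (C := 1) (α := -p) (by linarith)
      (ae_of_all _ fun z => ?_) hmeas
    have : (1 + ‖z‖) ^ (-α) ≤ 1 :=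
      Real.rpow_le_one_of_one_le_of_nonpos (by linarith [norm_nonneg z]) (neg_nonpos.2 hα0)
    rw [neg_neg, one_mul, Real.norm_of_nonneg (by positivity)]
    exact mul_le_of_le_one_left (by positivity) this
  have hcompl : IntegrableOn (fun z : E => (1 + ‖z‖) ^ (-α) * ‖z‖ ^ p) (ball 0 1)ᶜ μ := by
    refine Integrable.mono' (((integrable_one_add_norm hα).const_mul (2 ^ (-p))).integrableOn)
      hmeas.restrict (ae_restrict_of_forall_mem measurableSet_ball.compl fun z hz => ?_)
    have hz : 1 ≤ ‖z‖ := by simpa using hz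
    have hkernel : ‖z‖ ^ p ≤ 2 ^ (-p) * (1 + ‖z‖) ^ p :=
      rpow_le_rpow_neg_mul_rpow_of_le_mul (by positivity) two_pos (by linarith) hp0
    rw [Real.norm_of_nonneg (by positivity)]
    calc (1 + ‖z‖) ^ (-α) * ‖z‖ ^ p ≤ (1 + ‖z‖) ^ (-α) * (2 ^ (-p) * (1 + ‖z‖) ^ p) := by
          gcongr
      _ = 2 ^ (-p) * (1 + ‖z‖) ^ (-(α - p)) := by
          rw [neg_sub, sub_eq_neg_add, Real.rpow_add (by positivity)]; ring
  rw [← integrableOn_univ, ← Set.union_compl_self (ball (0 : E) 1)]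
  exact hball.union hcompl

lemma tendsto_lintegral_one_add_max_rpow_neg_mul_norm_rpow {α p : ℝ}
    (hp : -(finrank ℝ E : ℝ) < p) (hp0 : p ≤ 0) (hα : (finrank ℝ E : ℝ) < α - p) :
    Tendsto (fun r : ℝ => ∫⁻ z, ENNReal.ofReal ((1 + max r ‖z‖) ^ (-α) * ‖z‖ ^ p) ∂μ)
      atTop (𝓝 0) := by
  have hα0 : 0 < α := by linarith
  simpa using tendsto_lintegral_filter_of_dominated_convergence (f := 0)
    (F := fun r z => ENNReal.ofReal ((1 + max r ‖z‖) ^ (-α) * ‖z‖ ^ p))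
    (fun z => ENNReal.ofReal ((1 + ‖z‖) ^ (-α) * ‖z‖ ^ p))
    (Eventually.of_forall fun r => by fun_prop)
    (Eventually.of_forall fun r => ae_of_all _ fun z => ENNReal.ofReal_le_ofReal <|
      mul_le_mul_of_nonneg_right (Real.rpow_le_rpow_of_nonpos (by positivity)
        (by gcongr; exact le_max_right _ _) (neg_nonpos.2 hα0.le)) (by positivity))
    (integrable_one_add_norm_rpow_neg_mul_norm_rpow hp hp0 hα).lintegral_lt_top.ne
    (ae_of_all _ fun z => by
      have hmax : Tendsto (fun r : ℝ => 1 + max r ‖z‖) atTop atTop :=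
        tendsto_atTop_add_const_left _ _ (tendsto_atTop_mono (le_max_left · _) tendsto_id)
      simpa using ENNReal.tendsto_ofReal
        (((tendsto_rpow_neg_atTop hα0).comp hmax).mul_const (‖z‖ ^ p)))

lemma tendsto_lintegral_one_add_norm_rpow_neg_mul_add_norm_rpow {α p : ℝ}
    (hp : p < 0) (hα : (finrank ℝ E : ℝ) < α - p) :
    Tendsto (fun R : ℝ => ∫⁻ y, ENNReal.ofReal ((1 + ‖y‖) ^ (-α) * (R + ‖y‖) ^ p) ∂μ)
      atTop (𝓝 0) := by
  simpa using tendsto_lintegral_filter_of_dominated_convergence (f := 0)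
    (F := fun R y => ENNReal.ofReal ((1 + ‖y‖) ^ (-α) * (R + ‖y‖) ^ p))
    (fun y => ENNReal.ofReal ((1 + ‖y‖) ^ (-(α - p))))
    (Eventually.of_forall fun R => by fun_prop)
    ((eventually_ge_atTop 1).mono fun R hR => ae_of_all _ fun y => by
      refine ENNReal.ofReal_le_ofReal ?_
      rw [neg_sub, sub_eq_neg_add, Real.rpow_add (by positivity)]
      exact mul_le_mul_of_nonneg_left
        (Real.rpow_le_rpow_of_nonpos (by positivity) (by linarith) hp.le) (by positivity))
    (integrable_one_add_norm hα (μ := μ)).lintegral_lt_top.ne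
    (ae_of_all _ fun y => by
      simpa using ENNReal.tendsto_ofReal (((tendsto_rpow_neg_atTop (neg_pos.2 hp)).comp
        (tendsto_atTop_add_const_right _ ‖y‖ tendsto_id)).const_mul ((1 + ‖y‖) ^ (-α))))

lemma lintegral_mul_norm_sub_rpow_le {ρ : E → ℝ} {C α p : ℝ} (hC : 0 ≤ C) (hα : 0 ≤ α)
    (hp : p ≤ 0) (hρ : ∀ y, ρ y ≤ C * (1 + ‖y‖) ^ (-α)) (x : E) :
    ∫⁻ y, ENNReal.ofReal (ρ y * ‖x - y‖ ^ p) ∂μ ≤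
      ENNReal.ofReal C *
          ∫⁻ z, ENNReal.ofReal ((1 + max (‖x‖ / 2) ‖z‖) ^ (-α) * ‖z‖ ^ p) ∂μ +
        ENNReal.ofReal (C * 5 ^ (-p)) *
          ∫⁻ y, ENNReal.ofReal ((1 + ‖y‖) ^ (-α) * (‖x‖ + ‖y‖) ^ p) ∂μ := by
  calc ∫⁻ y, ENNReal.ofReal (ρ y * ‖x - y‖ ^ p) ∂μ
      ≤ ∫⁻ y, (ENNReal.ofReal C *
            ENNReal.ofReal ((1 + max (‖x‖ / 2) ‖x - y‖) ^ (-α) * ‖x - y‖ ^ p) +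
          ENNReal.ofReal (C * 5 ^ (-p)) *
            ENNReal.ofReal ((1 + ‖y‖) ^ (-α) * (‖x‖ + ‖y‖) ^ p)) ∂μ := by
        refine lintegral_mono fun y => ?_
        rw [← ENNReal.ofReal_mul hC, ← ENNReal.ofReal_mul (by positivity),
          ← ENNReal.ofReal_add (by positivity) (by positivity)]
        exact ENNReal.ofReal_le_ofReal (mul_norm_sub_rpow_le hC hα hp hρ x y)
    _ = _ := by
        rw [lintegral_add_right _ (by fun_prop), lintegral_const_mul' _ _ ENNReal.ofReal_ne_top,
          lintegral_const_mul' _ _ ENNReal.ofReal_ne_top,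
          lintegral_sub_left_eq_self
            (fun z => ENNReal.ofReal ((1 + max (‖x‖ / 2) ‖z‖) ^ (-α) * ‖z‖ ^ p)) x]

theorem tendsto_lintegral_mul_norm_sub_rpow_cobounded {ρ : E → ℝ} {C α p : ℝ} (hC : 0 ≤ C)
    (hρ : ∀ y, ρ y ≤ C * (1 + ‖y‖) ^ (-α)) (hp : -(finrank ℝ E : ℝ) < p) (hp0 : p < 0)
    (hα : (finrank ℝ E : ℝ) < α - p) :
    Tendsto (fun x => ∫⁻ y, ENNReal.ofReal (ρ y * ‖x - y‖ ^ p) ∂μ) (Bornology.cobounded E)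
      (𝓝 0) := by
  have hnear := (tendsto_lintegral_one_add_max_rpow_neg_mul_norm_rpow (μ := μ) hp hp0.le
    hα).comp ((tendsto_norm_cobounded_atTop (E := E)).atTop_div_const two_pos)
  have hfar := (tendsto_lintegral_one_add_norm_rpow_neg_mul_add_norm_rpow (μ := μ) hp0
    hα).comp (tendsto_norm_cobounded_atTop (E := E))
  have hbound := (ENNReal.Tendsto.const_mul hnear (.inr (ENNReal.ofReal_ne_top (r := C)))).add
    (ENNReal.Tendsto.const_mul hfar (.inr (ENNReal.ofReal_ne_top (r := C * 5 ^ (-p)))))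
  rw [mul_zero, mul_zero, add_zero] at hbound
  exact tendsto_of_tendsto_of_tendsto_of_le_of_le tendsto_const_nhds hbound
    (fun _ => zero_le) (lintegral_mul_norm_sub_rpow_le hC (by linarith) hp0.le hρ)

end FiniteDimensional

theorem riesz_potential_vanishes_at_infinity_general
    (N : ℕ) (hN : 2 ≤ N) (σ : ℝ) (hσ0 : 0 < σ) (hσ2 : σ < 2)
    (ρ : EuclideanSpace ℝ (Fin N) → ℝ) (hρc : Continuous ρ)
    (Ccheck Rcheck α : ℝ) (hC : 0 < Ccheck) (hα : σ < α)
    (hdecay : ∀ x : EuclideanSpace ℝ (Fin N), Rcheck ≤ ‖x‖ →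
      ρ x ≤ Ccheck * ‖x‖ ^ (-α)) :
    ∀ ε > (0 : ℝ), ∃ M > (0 : ℝ), ∀ᵐ x : EuclideanSpace ℝ (Fin N),
      M < ‖x‖ →
      (∫⁻ y : EuclideanSpace ℝ (Fin N),
          ENNReal.ofReal (ρ y * ‖x - y‖ ^ (σ - (N : ℝ))))
        < ENNReal.ofReal ε := by
  intro ε hε
  have hσN : σ < N := by
    have : (2 : ℝ) ≤ N := by exact_mod_cast hN
    linarith
  obtain ⟨C, hC0, hρC⟩ := hρc.exists_le_mul_one_add_norm_rpow hC.le (hσ0.trans hα).le hdecay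
  have hlim := tendsto_lintegral_mul_norm_sub_rpow_cobounded (μ := volume) hC0 hρC
    (p := σ - N) (by rw [finrank_euclideanSpace_fin]; linarith) (by linarith)
    (by rw [finrank_euclideanSpace_fin]; linarith)
  obtain ⟨M, -, hM⟩ := (hasBasis_cobounded_norm (E := EuclideanSpace ℝ (Fin N))).eventually_iff.1
    (hlim.eventually (gt_mem_nhds (ENNReal.ofReal_pos.2 hε)))
  exact ⟨max M 1, by positivity, ae_of_all _ fun x hx => hM (le_max_left M 1 |>.trans hx.le)⟩

/-- The Riesz potential of a fast-decaying density vanishes at infinity in the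
essential sense: for every `ε > 0` there is `M > 0` with
`∫_{ℝ^N} ρ(y)|x−y|^{σ−N} dy < ε` for a.e. `x` with `|x| > M`. -/
theorem riesz_potential_vanishes_at_infinity
    (N : ℕ) (hN : 2 ≤ N) (σ : ℝ) (hσ0 : 0 < σ) (hσ2 : σ < 2)
    (ρ : EuclideanSpace ℝ (Fin N) → ℝ) (hρc : Continuous ρ)
    (hρpos : ∀ x, 0 < ρ x)
    (Ccheck Rcheck α : ℝ) (hC : 0 < Ccheck) (hR : 0 < Rcheck) (hα : σ < α)
    (hdecay : ∀ x : EuclideanSpace ℝ (Fin N), Rcheck ≤ ‖x‖ →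
      ρ x ≤ Ccheck * ‖x‖ ^ (-α)) :
    ∀ ε > (0 : ℝ), ∃ M > (0 : ℝ), ∀ᵐ x : EuclideanSpace ℝ (Fin N),
      M < ‖x‖ →
      (∫⁻ y : EuclideanSpace ℝ (Fin N),
          ENNReal.ofReal (ρ y * ‖x - y‖ ^ (σ - (N : ℝ))))
        < ENNReal.ofReal ε :=
  riesz_potential_vanishes_at_infinity_general N hN σ hσ0 hσ2 ρ hρc Ccheck Rcheck α hC hα hdecay
end

section
/- Let s > 1 and set N := s/(s−1). Let m ≥ 1, q₀ > 0 and M > 0. Define recursively q_{k+1} = s(q_k + m − 1) for k ≥ 0. Let (a_k)_{k ≥ 0} be a sequence of nonnegative real numbers with a₀ > 0 satisfying a_{k+1} ≤ M^{s/q_{k+1}} · a_k^{s q_k / q_{k+1}} for every k ≥ 0. Then limsup_{k→∞} a_k ≤ M^{N/A} · a₀^{q₀/A}, where A := q₀ + N(m−1). -/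
/-!
Raising the hypothesis to the power `q_{k+1}` turns it into `b_{k+1} ≤ M^s b_k^s` for
`b_k = a_k^{q_k}`, which iterates to `b_k ≤ M^{N(s^k-1)} b_0^{s^k}`. Hence
`a_k ≤ M^{N(s^k-1)/q_k} a_0^{q_0 s^k/q_k}`, and since `q_k = s^k A - N(m-1)` the ratio
`q_k / s^k` tends to `A`, so the two exponents tend to `N/A` and `q_0/A`.
-/

open Filter Topology

namespace MoserIteration

section AffineRecursion

variable {s d : ℝ} {q : ℕ → ℝ}

theorem eq_of_affine_recursion (hs : s ≠ 1) (hq : ∀ k, q (k + 1) = s * (q k + d)) (k : ℕ) :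
    q k = s ^ k * (q 0 + s / (s - 1) * d) - s / (s - 1) * d := by
  have hs' : s - 1 ≠ 0 := sub_ne_zero.mpr hs
  induction k with
  | zero => ring
  | succ k ih =>
    rw [hq k, ih, pow_succ]
    field_simp
    ring

theorem pos_of_affine_recursion (hs : 0 < s) (hd : 0 ≤ d) (hq0 : 0 < q 0)
    (hq : ∀ k, q (k + 1) = s * (q k + d)) (k : ℕ) : 0 < q k := by
  induction k with
  | zero => exact hq0
  | succ k ih =>
    rw [hq k]
    positivity

theorem tendsto_div_pow_of_affine_recursion (hs : 1 < s) (hq : ∀ k, q (k + 1) = s * (q k + d)) :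
    Tendsto (fun k => q k / s ^ k) atTop (𝓝 (q 0 + s / (s - 1) * d)) := by
  have hinv : Tendsto (fun k : ℕ => (s ^ k)⁻¹) atTop (𝓝 0) :=
    (tendsto_pow_atTop_atTop_of_one_lt hs).inv_tendsto_atTop
  have hlim := (hinv.const_mul (s / (s - 1) * d)).const_sub (q 0 + s / (s - 1) * d)
  rw [mul_zero, sub_zero] at hlim
  refine hlim.congr fun k => ?_
  have hsk : s ^ k ≠ 0 := pow_ne_zero k (by linarith)
  rw [eq_of_affine_recursion hs.ne' hq k]
  field_simp

end AffineRecursion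

theorem le_mul_rpow_of_le_mul_rpow_succ {M s : ℝ} {b : ℕ → ℝ} (hM : 0 < M) (hs0 : 0 ≤ s)
    (hs1 : s ≠ 1) (hb : ∀ k, 0 ≤ b k) (hrec : ∀ k, b (k + 1) ≤ M ^ s * b k ^ s) (k : ℕ) :
    b k ≤ M ^ (s * (s ^ k - 1) / (s - 1)) * b 0 ^ s ^ k := by
  induction k with
  | zero => simp
  | succ k ih =>
    have hs' : s - 1 ≠ 0 := sub_ne_zero.mpr hs1
    calc b (k + 1) ≤ M ^ s * b k ^ s := hrec k
      _ ≤ M ^ s * (M ^ (s * (s ^ k - 1) / (s - 1)) * b 0 ^ s ^ k) ^ s := by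
        gcongr
        exact hb k
      _ = M ^ (s + s * (s ^ k - 1) / (s - 1) * s) * b 0 ^ (s ^ k * s) := by
        rw [Real.mul_rpow (by positivity) (Real.rpow_nonneg (hb 0) _), ← Real.rpow_mul hM.le,
          ← Real.rpow_mul (hb 0), ← mul_assoc, Real.rpow_add hM]
      _ = M ^ (s * (s ^ (k + 1) - 1) / (s - 1)) * b 0 ^ s ^ (k + 1) := by
        congr 2
        field_simp
        ring

section MoserSequence

variable {s M : ℝ} {q a : ℕ → ℝ}

theorem rpow_succ_le_of_moser_step (hM : 0 < M) (hq : ∀ k, 0 < q k) (ha : ∀ k, 0 ≤ a k)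
    (ha_rec : ∀ k, a (k + 1) ≤ M ^ (s / q (k + 1)) * a k ^ (s * q k / q (k + 1))) (k : ℕ) :
    a (k + 1) ^ q (k + 1) ≤ M ^ s * (a k ^ q k) ^ s := by
  have hak : 0 ≤ (a k ^ q k) ^ s := Real.rpow_nonneg (Real.rpow_nonneg (ha k) _) _
  rw [← Real.le_rpow_inv_iff_of_pos (ha _) (mul_nonneg (by positivity) hak) (hq _),
    Real.mul_rpow (by positivity) hak,
    ← Real.rpow_mul hM.le, ← Real.rpow_mul (ha k), ← Real.rpow_mul (ha k)]
  convert ha_rec k using 3 <;> ring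

theorem le_mul_rpow_of_moser_step (hM : 0 < M) (hs0 : 0 ≤ s) (hs1 : s ≠ 1) (hq : ∀ k, 0 < q k)
    (ha : ∀ k, 0 ≤ a k)
    (ha_rec : ∀ k, a (k + 1) ≤ M ^ (s / q (k + 1)) * a k ^ (s * q k / q (k + 1))) (k : ℕ) :
    a k ≤ M ^ (s * (s ^ k - 1) / (s - 1) / q k) * a 0 ^ (q 0 * s ^ k / q k) := by
  have hpow := le_mul_rpow_of_le_mul_rpow_succ hM hs0 hs1 (fun k => Real.rpow_nonneg (ha k) (q k))
    (rpow_succ_le_of_moser_step hM hq ha ha_rec) k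
  have ha0 : 0 ≤ (a 0 ^ q 0) ^ s ^ k := Real.rpow_nonneg (Real.rpow_nonneg (ha 0) _) _
  rw [← Real.le_rpow_inv_iff_of_pos (ha k) (mul_nonneg (by positivity) ha0) (hq k)] at hpow
  rwa [Real.mul_rpow (by positivity) ha0, ← Real.rpow_mul hM.le,
    ← Real.rpow_mul (ha 0), ← Real.rpow_mul (ha 0), ← div_eq_mul_inv, ← div_eq_mul_inv] at hpow

end MoserSequence

theorem tendsto_moser_bound {s d M : ℝ} {q : ℕ → ℝ} (hM : 0 < M) (hs : 1 < s) (hd : 0 ≤ d)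
    (hq0 : 0 < q 0) (hq : ∀ k, q (k + 1) = s * (q k + d)) (c : ℝ) :
    Tendsto (fun k => M ^ (s * (s ^ k - 1) / (s - 1) / q k) * c ^ (q 0 * s ^ k / q k)) atTop
      (𝓝 (M ^ (s / (s - 1) / (q 0 + s / (s - 1) * d)) *
        c ^ (q 0 / (q 0 + s / (s - 1) * d)))) := by
  set A := q 0 + s / (s - 1) * d
  have hA : 0 < A := by
    have : 0 < s / (s - 1) := div_pos (by linarith) (by linarith)
    positivity
  have hqk (k : ℕ) : q k ≠ 0 := (pos_of_affine_recursion (by linarith) hd hq0 hq k).ne'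
  have hsk (k : ℕ) : s ^ k ≠ 0 := pow_ne_zero k (by linarith)
  have hratio := tendsto_div_pow_of_affine_recursion hs hq
  have hinv : Tendsto (fun k : ℕ => (s ^ k)⁻¹) atTop (𝓝 0) :=
    (tendsto_pow_atTop_atTop_of_one_lt hs).inv_tendsto_atTop
  have hexpM : Tendsto (fun k => s * (s ^ k - 1) / (s - 1) / q k) atTop (𝓝 (s / (s - 1) / A)) := by
    have hlim := ((hinv.const_sub 1).const_mul (s / (s - 1))).div hratio hA.ne'
    rw [sub_zero, mul_one] at hlim
    refine hlim.congr fun k => ?_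
    simp only [Pi.div_apply]
    field_simp [hqk k, hsk k]
  have hexpc : Tendsto (fun k => q 0 * s ^ k / q k) atTop (𝓝 (q 0 / A)) :=
    (tendsto_const_nhds.div hratio hA.ne').congr fun k => by
      simp only [Pi.div_apply]
      field_simp [hqk k, hsk k]
  exact (tendsto_const_nhds.rpow hexpM (Or.inl hM.ne')).mul
    (tendsto_const_nhds.rpow hexpc (Or.inr (div_pos hq0 hA)))

theorem limsup_le_of_le_of_tendsto {α : Type*} {l : Filter α} [l.NeBot] {a u : α → ℝ} {b L : ℝ}
    (hb : ∀ x, b ≤ a x) (hau : ∀ x, a x ≤ u x) (hu : Tendsto u l (𝓝 L)) : limsup a l ≤ L :=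
  hu.limsup_eq ▸ limsup_le_limsup (Eventually.of_forall hau) (isCoboundedUnder_le_of_le l hb)
    hu.isBoundedUnder_le

end MoserIteration

open MoserIteration in
theorem moser_iteration_limsup_general
    (s m q₀ M : ℝ) (hs : 1 < s) (hm : 1 ≤ m) (hq₀ : 0 < q₀) (hM : 0 < M)
    (q : ℕ → ℝ) (hq_zero : q 0 = q₀)
    (hq_rec : ∀ k : ℕ, q (k + 1) = s * (q k + m - 1))
    (a : ℕ → ℝ) (ha_nonneg : ∀ k : ℕ, 0 ≤ a k)
    (ha_rec : ∀ k : ℕ, a (k + 1) ≤ M ^ (s / q (k + 1)) * a k ^ (s * q k / q (k + 1))) :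
    Filter.limsup a Filter.atTop
      ≤ M ^ ((s / (s - 1)) / (q₀ + (s / (s - 1)) * (m - 1))) *
        a 0 ^ (q₀ / (q₀ + (s / (s - 1)) * (m - 1))) := by
  subst hq_zero
  have hq_affine (k : ℕ) : q (k + 1) = s * (q k + (m - 1)) := by rw [hq_rec, add_sub_assoc]
  have hq_pos := pos_of_affine_recursion (by linarith) (sub_nonneg.mpr hm) hq₀ hq_affine
  exact limsup_le_of_le_of_tendsto ha_nonneg
    (le_mul_rpow_of_moser_step hM (by linarith) hs.ne' hq_pos ha_nonneg ha_rec)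
    (tendsto_moser_bound hM hs (sub_nonneg.mpr hm) hq₀ hq_affine (a 0))

/-- The real-sequence iteration lemma underlying the Moser-type smoothing
estimate: with `N = s/(s−1)`, `A = q₀ + N(m−1)` and the recursion
`q_{k+1} = s(q_k + m − 1)`, any nonnegative sequence satisfying
`a_{k+1} ≤ M^{s/q_{k+1}} a_k^{s q_k/q_{k+1}}` has
`limsup a_k ≤ M^{N/A} a₀^{q₀/A}`. -/
theorem moser_iteration_limsup
    (s m q₀ M : ℝ) (hs : 1 < s) (hm : 1 ≤ m) (hq₀ : 0 < q₀) (hM : 0 < M)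
    (q : ℕ → ℝ) (hq_zero : q 0 = q₀)
    (hq_rec : ∀ k : ℕ, q (k + 1) = s * (q k + m - 1))
    (a : ℕ → ℝ) (ha_nonneg : ∀ k : ℕ, 0 ≤ a k) (ha_zero : 0 < a 0)
    (ha_rec : ∀ k : ℕ, a (k + 1) ≤ M ^ (s / q (k + 1)) * a k ^ (s * q k / q (k + 1))) :
    Filter.limsup a Filter.atTop
      ≤ M ^ ((s / (s - 1)) / (q₀ + (s / (s - 1)) * (m - 1))) *
        a 0 ^ (q₀ / (q₀ + (s / (s - 1)) * (m - 1))) :=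
  moser_iteration_limsup_general s m q₀ M hs hm hq₀ hM q hq_zero hq_rec a ha_nonneg ha_rec
end
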